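/- arXiv:2012.14181 — 8 statements merged into one kernel-verified Lean document; each statement's English description precedes it below -/
import Mathlib

section
/- Let G be an abelian group and let P₁, P₂ be the positive cones of two partial orders on G (i.e., P₁∩P₁⁻¹={1}, P₁P₁⊆P₁, and likewise for P₂). If P₁∩P₂⁻¹={1}, then the set P₁∪P₂∪P₁P₂ is the positive cone of a partial order on G, i.e., it is closed under multiplication and its intersection with its set of inverses is {1}. -/
/-! If `x` and `x⁻¹` both lie in `P₁P₂`, multiplying the two factorizations gives
`(p r)(q u) = 1` with `p r ∈ P₁` and `q u ∈ P₂`, so `p r ∈ P₁ ∩ P₂⁻¹` is trivial; then the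
antisymmetry of each cone forces all four factors to be `1`. Since each cone contains `1`,
the union `P₁ ∪ P₂ ∪ P₁P₂` is just `P₁P₂`. -/

open Pointwise

namespace Set

variable {G : Type*}

lemma one_mem_of_inter_eq_one [One G] {s t : Set G} (h : s ∩ t = {1}) : (1 : G) ∈ s :=
  (h.ge rfl).1

lemma union_union_mul_eq_mul [MulOneClass G] {s t : Set G} (hs : (1 : G) ∈ s)
    (ht : (1 : G) ∈ t) : s ∪ t ∪ s * t = s * t :=
  union_eq_right.2 (union_subset (subset_mul_left s ht) (subset_mul_right t hs))

lemma mul_mul_mul_subset_mul [CommMonoid G] {s t : Set G} (hs : s * s ⊆ s) (ht : t * t ⊆ t) :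
    s * t * (s * t) ⊆ s * t := by
  rw [mul_mul_mul_comm]
  exact mul_subset_mul hs ht

lemma eq_one_of_mul_eq_one_of_inter_inv_eq_one [Group G] {s t : Set G} (h : s ∩ t⁻¹ = {1})
    {a b : G} (ha : a ∈ s) (hb : b ∈ t) (hab : a * b = 1) : a = 1 :=
  h.subset ⟨ha, by rwa [mem_inv, inv_eq_of_mul_eq_one_right hab]⟩

variable [CommGroup G] {s t : Set G}

lemma eq_one_of_mem_mul_of_inv_mem_mul (hsm : s * s ⊆ s) (hsi : s ∩ s⁻¹ = {1})
    (htm : t * t ⊆ t) (hti : t ∩ t⁻¹ = {1}) (hst : s ∩ t⁻¹ = {1}) {x : G}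
    (hx : x ∈ s * t) (hx' : x⁻¹ ∈ s * t) : x = 1 := by
  obtain ⟨p, hp, q, hq, rfl⟩ := mem_mul.1 hx
  obtain ⟨r, hr, u, hu, hru⟩ := mem_mul.1 hx'
  have hprqu : p * r * (q * u) = 1 := by rw [mul_mul_mul_comm, hru, mul_inv_cancel]
  have hpr : p * r = 1 := eq_one_of_mul_eq_one_of_inter_inv_eq_one hst
    (hsm (mul_mem_mul hp hr)) (htm (mul_mem_mul hq hu)) hprqu
  have hqu : q * u = 1 := by rwa [hpr, one_mul] at hprqu
  rw [eq_one_of_mul_eq_one_of_inter_inv_eq_one hsi hp hr hpr,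
    eq_one_of_mul_eq_one_of_inter_inv_eq_one hti hq hu hqu, one_mul]

lemma mul_inter_inv_eq_one (hsm : s * s ⊆ s) (hsi : s ∩ s⁻¹ = {1})
    (htm : t * t ⊆ t) (hti : t ∩ t⁻¹ = {1}) (hst : s ∩ t⁻¹ = {1}) :
    s * t ∩ (s * t)⁻¹ = {1} := by
  have h1 : (1 : G) ∈ s * t :=
    ⟨1, one_mem_of_inter_eq_one hsi, 1, one_mem_of_inter_eq_one hti, one_mul 1⟩
  refine Subset.antisymm (fun x ⟨hx, hx'⟩ ↦
    eq_one_of_mem_mul_of_inv_mem_mul hsm hsi htm hti hst hx hx') ?_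
  rintro _ rfl
  exact ⟨h1, by rwa [mem_inv, inv_one]⟩

end Set

theorem stmt_0 {G : Type*} [CommGroup G] (P₁ P₂ : Set G)
    (h1m : P₁ * P₁ ⊆ P₁) (h1i : P₁ ∩ P₁⁻¹ = {1})
    (h2m : P₂ * P₂ ⊆ P₂) (h2i : P₂ ∩ P₂⁻¹ = {1})
    (h12 : P₁ ∩ P₂⁻¹ = {1}) :
    (P₁ ∪ P₂ ∪ P₁ * P₂) * (P₁ ∪ P₂ ∪ P₁ * P₂) ⊆ P₁ ∪ P₂ ∪ P₁ * P₂ ∧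
    (P₁ ∪ P₂ ∪ P₁ * P₂) ∩ (P₁ ∪ P₂ ∪ P₁ * P₂)⁻¹ = {1} := by
  rw [Set.union_union_mul_eq_mul (Set.one_mem_of_inter_eq_one h1i)
    (Set.one_mem_of_inter_eq_one h2i)]
  exact ⟨Set.mul_mul_mul_subset_mul h1m h2m, Set.mul_inter_inv_eq_one h1m h1i h2m h2i h12⟩
end

section
/- Let G be an abelian group and P₁, P₂ positive cones of partial orders on G. There exists a smallest positive cone on G containing both P₁ and P₂ if and only if P₁ ∩ P₂⁻¹ = {1}; in that case the smallest such cone equals P₁ ∪ P₂ ∪ P₁P₂. -/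
/-!
If some cone `Q` contains `P₁` and `P₂`, then `P₁ ∩ P₂⁻¹ ⊆ Q ∩ Q⁻¹ = {1}`. Conversely, when
`P₁ ∩ P₂⁻¹ = {1}` the product `P₁ P₂` is a cone: if `a b = (a' b')⁻¹` with `a, a' ∈ P₁` and
`b, b' ∈ P₂`, then `a a' = (b b')⁻¹ ∈ P₁ ∩ P₂⁻¹`, so `a a' = b b' = 1`, and antisymmetry of `P₁`
and `P₂` forces `a = b = 1`. Every cone containing `P₁` and `P₂` contains `P₁ P₂`, which in turn
contains `P₁ ∪ P₂` because `1 ∈ P₁, P₂`; so `P₁ P₂` is the least such cone.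
-/

open Pointwise

/-- `P` is the positive cone of a partial order on the abelian group `G`. -/
def IsPosCone {G : Type*} [CommGroup G] (P : Set G) : Prop :=
  P * P ⊆ P ∧ P ∩ P⁻¹ = {1}

theorem Set.eq_one_of_mul_eq_one_of_inter_inv_eq_one_s2 {G : Type*} [Group G] {s t : Set G}
    (h : s ∩ t⁻¹ = {1}) {a b : G} (ha : a ∈ s) (hb : b ∈ t) (hab : a * b = 1) : a = 1 := by
  have : a ∈ s ∩ t⁻¹ := ⟨ha, by rwa [Set.mem_inv, inv_eq_of_mul_eq_one_right hab]⟩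
  rwa [h] at this

namespace IsPosCone

variable {G : Type*} [CommGroup G] {P P₁ P₂ Q : Set G}

theorem one_mem (hP : IsPosCone P) : (1 : G) ∈ P := by
  have : (1 : G) ∈ P ∩ P⁻¹ := by rw [hP.2]; rfl
  exact this.1

theorem mul_mem (hP : IsPosCone P) {a b : G} (ha : a ∈ P) (hb : b ∈ P) : a * b ∈ P :=
  hP.1 (Set.mul_mem_mul ha hb)

theorem eq_one_of_mul_eq_one (hP : IsPosCone P) {a b : G} (ha : a ∈ P) (hb : b ∈ P)
    (hab : a * b = 1) : a = 1 :=
  Set.eq_one_of_mul_eq_one_of_inter_inv_eq_one_s2 hP.2 ha hb hab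

theorem mul_subset (hQ : IsPosCone Q) (h₁ : P₁ ⊆ Q) (h₂ : P₂ ⊆ Q) : P₁ * P₂ ⊆ Q :=
  (Set.mul_subset_mul h₁ h₂).trans hQ.1

theorem inter_inv_eq_one (hP₁ : IsPosCone P₁) (hP₂ : IsPosCone P₂) (hQ : IsPosCone Q)
    (h₁ : P₁ ⊆ Q) (h₂ : P₂ ⊆ Q) : P₁ ∩ P₂⁻¹ = {1} := by
  apply subset_antisymm
  · rw [← hQ.2]
    exact Set.inter_subset_inter h₁ (Set.inv_subset_inv.mpr h₂)
  · rintro _ rfl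
    exact ⟨hP₁.one_mem, by simpa using hP₂.one_mem⟩

theorem mul (hP₁ : IsPosCone P₁) (hP₂ : IsPosCone P₂) (h : P₁ ∩ P₂⁻¹ = {1}) :
    IsPosCone (P₁ * P₂) := by
  refine ⟨?_, subset_antisymm ?_ ?_⟩
  · rw [mul_mul_mul_comm]
    exact Set.mul_subset_mul hP₁.1 hP₂.1
  · rintro _ ⟨⟨a, ha, b, hb, rfl⟩, hinv⟩
    obtain ⟨a', ha', b', hb', hab' : a' * b' = (a * b)⁻¹⟩ := Set.mem_inv.mp hinv
    have hprod : a * a' * (b * b') = 1 := by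
      rw [mul_mul_mul_comm, hab', mul_inv_cancel]
    have haa' : a * a' = 1 :=
      Set.eq_one_of_mul_eq_one_of_inter_inv_eq_one_s2 h (hP₁.mul_mem ha ha')
        (hP₂.mul_mem hb hb') hprod
    have hbb' : b * b' = 1 := by rwa [haa', one_mul] at hprod
    rw [hP₁.eq_one_of_mul_eq_one ha ha' haa', hP₂.eq_one_of_mul_eq_one hb hb' hbb']
    exact mul_one 1
  · rintro _ rfl
    have h1 : (1 : G) ∈ P₁ * P₂ := by simpa using Set.mul_mem_mul hP₁.one_mem hP₂.one_mem
    exact ⟨h1, by rwa [Set.mem_inv, inv_one]⟩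

end IsPosCone

theorem stmt_2 {G : Type*} [CommGroup G] (P₁ P₂ : Set G)
    (h1 : IsPosCone P₁) (h2 : IsPosCone P₂) :
    ((∃ P : Set G, IsPosCone P ∧ P₁ ⊆ P ∧ P₂ ⊆ P ∧
        ∀ Q : Set G, IsPosCone Q → P₁ ⊆ Q → P₂ ⊆ Q → P ⊆ Q) ↔ P₁ ∩ P₂⁻¹ = {1}) ∧
    (P₁ ∩ P₂⁻¹ = {1} →
      ∀ P : Set G, (IsPosCone P ∧ P₁ ⊆ P ∧ P₂ ⊆ P ∧
        ∀ Q : Set G, IsPosCone Q → P₁ ⊆ Q → P₂ ⊆ Q → P ⊆ Q) →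
        P = P₁ ∪ P₂ ∪ P₁ * P₂) := by
  have hsub₁ : P₁ ⊆ P₁ * P₂ := Set.subset_mul_left _ h2.one_mem
  have hsub₂ : P₂ ⊆ P₁ * P₂ := Set.subset_mul_right _ h1.one_mem
  refine ⟨⟨?_, fun h => ⟨_, h1.mul h2 h, hsub₁, hsub₂, fun Q hQ => hQ.mul_subset⟩⟩, ?_⟩
  · rintro ⟨Q, hQ, hQ₁, hQ₂, -⟩
    exact h1.inter_inv_eq_one h2 hQ hQ₁ hQ₂
  · rintro h P ⟨hP, hP₁, hP₂, hleast⟩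
    rw [Set.union_eq_right.mpr (Set.union_subset hsub₁ hsub₂)]
    exact (hleast _ (h1.mul h2 h) hsub₁ hsub₂).antisymm (hP.mul_subset hP₁ hP₂)
end

section
/- Let X be a totally ordered involutive FLₑ-algebra (involutive commutative residuated chain with constant f), with residual complement x' = x → f. Then for every x ≥ t (where t is the monoidal unit), x → x ≤ x. -/
/-!
Write `x'` for `x → f`. Since `t ≤ x` and `x · (x → x) ≤ x`, we get
`(x → x) · x' ≤ x · (x → x) · x' ≤ x · x' ≤ f`, i.e. `x → x ≤ x''`, and `x'' = x` by involutivity.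
-/

section Residuated

variable {X : Type*} [Preorder X] [CommMonoid X] {himp : X → X → X}

theorem mul_le_mul_right_of_residuated (adj : ∀ x y z : X, x * y ≤ z ↔ y ≤ himp x z)
    {a b : X} (hab : a ≤ b) (c : X) : a * c ≤ b * c := by
  rw [mul_comm a, adj]
  exact hab.trans ((adj c b (b * c)).mp (mul_comm c b).le)

theorem mul_himp_le (adj : ∀ x y z : X, x * y ≤ z ↔ y ≤ himp x z) (x y : X) :
    x * himp x y ≤ y :=
  (adj x (himp x y) y).mpr le_rfl

theorem himp_self_mul_himp_le_of_one_le (adj : ∀ x y z : X, x * y ≤ z ↔ y ≤ himp x z)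
    {x : X} (hx : 1 ≤ x) (z : X) : himp x x * himp x z ≤ z :=
  calc himp x x * himp x z = 1 * himp x x * himp x z := by rw [one_mul]
    _ ≤ x * himp x x * himp x z :=
        mul_le_mul_right_of_residuated adj (mul_le_mul_right_of_residuated adj hx _) _
    _ ≤ x * himp x z := mul_le_mul_right_of_residuated adj (mul_himp_le adj x x) _
    _ ≤ z := mul_himp_le adj x z

end Residuated

/-- In a totally ordered involutive FLₑ-algebra, for every `x ≥ t`
(the monoidal unit, written `1`), `x → x ≤ x`. -/
theorem stmt_4 {X : Type*} [LinearOrder X] [CommMonoid X]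
    (himp : X → X → X) (f : X)
    (adj : ∀ x y z : X, x * y ≤ z ↔ y ≤ himp x z)
    (invol : ∀ x : X, himp (himp x f) f = x)
    (x : X) (hx : (1 : X) ≤ x) :
    himp x x ≤ x := by
  have key : himp x f * himp x x ≤ f := by
    rw [mul_comm]
    exact himp_self_mul_himp_le_of_one_le adj hx f
  simpa only [invol x] using (adj _ _ _).mp key
end

section
/- In a totally ordered involutive FLₑ-chain, for every positive x (x ≥ t), the element x → x is a positive idempotent, and moreover x → x ≤ x; hence the set {x → x : x ∈ X, x ≥ t} equals the set of positive idempotent elements. -/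
/-!
Write `e = x → x`. The counit `x * e ≤ x` of the residuation gives `x * (e * e) ≤ x * e ≤ x`,
hence `e * e ≤ e`, while `1 ≤ e` gives `e ≤ e * e`; if moreover `1 ≤ x` then
`e = 1 * e ≤ x * e ≤ x`. Conversely a positive idempotent `u` satisfies `u * u ≤ u`, i.e.
`u ≤ u → u`, so `u = u → u`.
-/

def IsResidual {X : Type*} [Preorder X] [Mul X] (himp : X → X → X) : Prop :=
  ∀ x y z : X, x * y ≤ z ↔ y ≤ himp x z

namespace IsResidual

variable {X : Type*} [PartialOrder X] [CommMonoid X] {himp : X → X → X}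

theorem mul_le_mul_left (adj : IsResidual himp) (a : X) {y y' : X} (h : y ≤ y') :
    a * y ≤ a * y' :=
  (adj a y _).2 (h.trans ((adj a y' _).1 le_rfl))

theorem mul_himp_le (adj : IsResidual himp) (x z : X) : x * himp x z ≤ z :=
  (adj x _ z).2 le_rfl

theorem one_le_himp_self (adj : IsResidual himp) (x : X) : 1 ≤ himp x x :=
  (adj x 1 x).1 (mul_one x).le

theorem himp_self_mul_himp_self (adj : IsResidual himp) (x : X) :
    himp x x * himp x x = himp x x := by
  set e := himp x x
  refine le_antisymm ((adj x _ x).1 ?_) ?_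
  · calc x * (e * e) = e * (x * e) := by rw [← mul_assoc, mul_comm]
      _ ≤ e * x := adj.mul_le_mul_left e (adj.mul_himp_le x x)
      _ = x * e := mul_comm e x
      _ ≤ x := adj.mul_himp_le x x
  · calc e = e * 1 := (mul_one e).symm
      _ ≤ e * e := adj.mul_le_mul_left e (adj.one_le_himp_self x)

theorem himp_self_le (adj : IsResidual himp) {x : X} (hx : 1 ≤ x) : himp x x ≤ x :=
  calc himp x x = himp x x * 1 := (mul_one _).symm
    _ ≤ himp x x * x := adj.mul_le_mul_left _ hx
    _ = x * himp x x := mul_comm _ _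
    _ ≤ x := adj.mul_himp_le x x

theorem himp_self_eq_self (adj : IsResidual himp) {u : X} (hu : 1 ≤ u) (hidem : u * u = u) :
    himp u u = u :=
  le_antisymm (adj.himp_self_le hu) ((adj u u u).1 hidem.le)

end IsResidual

theorem stmt_8_general {X : Type*} [LinearOrder X] [CommMonoid X]
    (himp : X → X → X)
    (adj : ∀ x y z : X, x * y ≤ z ↔ y ≤ himp x z) :
    (∀ x : X, (1 : X) ≤ x →
      (1 : X) ≤ himp x x ∧ himp x x * himp x x = himp x x ∧ himp x x ≤ x) ∧
    {u : X | ∃ x : X, (1 : X) ≤ x ∧ u = himp x x} = {u : X | (1 : X) ≤ u ∧ u * u = u} := by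
  have adj : IsResidual himp := adj
  refine ⟨fun x hx => ⟨adj.one_le_himp_self x, adj.himp_self_mul_himp_self x,
    adj.himp_self_le hx⟩, ?_⟩
  ext u
  constructor
  · rintro ⟨x, -, rfl⟩
    exact ⟨adj.one_le_himp_self x, adj.himp_self_mul_himp_self x⟩
  · rintro ⟨hu, hidem⟩
    exact ⟨u, hu, (adj.himp_self_eq_self hu hidem).symm⟩

/-- In a totally ordered involutive FLₑ-chain, for positive `x` the element
`x → x` is a positive idempotent with `x → x ≤ x`; consequently
`{x → x : x ≥ t}` is exactly the set of positive idempotents. -/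
theorem stmt_8 {X : Type*} [LinearOrder X] [CommMonoid X]
    (himp : X → X → X) (f : X)
    (adj : ∀ x y z : X, x * y ≤ z ↔ y ≤ himp x z)
    (invol : ∀ x : X, himp (himp x f) f = x) :
    (∀ x : X, (1 : X) ≤ x →
      (1 : X) ≤ himp x x ∧ himp x x * himp x x = himp x x ∧ himp x x ≤ x) ∧
    {u : X | ∃ x : X, (1 : X) ≤ x ∧ u = himp x x} = {u : X | (1 : X) ≤ u ∧ u * u = u} :=
  stmt_8_general himp adj
end

section
/- Let ⟨Gᵤ, ς_{u→v}⟩ be a direct system of totally ordered abelian groups over a totally ordered index set κ, with order-preserving homomorphisms, such that for all u ≤ v the preimage under ς_{u→v} of any strictly positive element of G_v is strictly positive in Gᵤ. Fix s ∈ κ and a total order on G_s extending its given order, with positive cone P̃_s ⊇ P_s. For v > s define P̃_v = ς_{s→v}(P̃_s). Then for every v > s, P̃_v is a positive cone of a partial order on G_v, i.e., P̃_v·P̃_v ⊆ P̃_v and P̃_v ∩ P̃_v⁻¹ = {1}. -/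
/-!
In a linearly ordered group, a set `P` with `P ∩ P⁻¹ = {1}` containing the positive cone has
only elements `≥ 1`. A monotone homomorphism therefore maps `P̃ₛ` into the positive cone of
`Gᵥ`, and a set of elements `≥ 1` that contains `1` meets its inverse exactly in `{1}`.
Closure under products is inherited because the image of a product set is the product of images.
-/

open Pointwise

theorem Set.image_mul_subset_image_of_mul_subset {M N F : Type*} [Mul M] [Mul N] [FunLike F M N]
    [MulHomClass F M N] (f : F) {P : Set M} (hP : P * P ⊆ P) : f '' P * f '' P ⊆ f '' P := by
  rw [← Set.image_mul]
  exact Set.image_mono hP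

theorem one_le_of_mem_of_inter_inv_eq_one {G : Type*} [CommGroup G] [LinearOrder G]
    [MulLeftMono G] {P : Set G} (hanti : P ∩ P⁻¹ = {1}) (hpos : {x : G | 1 ≤ x} ⊆ P) {a : G}
    (ha : a ∈ P) : 1 ≤ a := by
  by_contra! h
  have ha' : a ∈ P ∩ P⁻¹ := ⟨ha, hpos (one_le_inv'.mpr h.le)⟩
  rw [hanti] at ha'
  exact h.ne ha'

theorem Set.inter_inv_eq_one_of_one_le {G : Type*} [Group G] [PartialOrder G] [MulLeftMono G]
    {Q : Set G} (hQ : ∀ y ∈ Q, 1 ≤ y) (h1 : (1 : G) ∈ Q) : Q ∩ Q⁻¹ = {1} := by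
  ext y
  refine ⟨fun ⟨hy, hy'⟩ => ?_, ?_⟩
  · exact le_antisymm (one_le_inv'.mp (hQ _ hy')) (hQ y hy)
  · rintro rfl
    exact ⟨h1, by simpa using h1⟩

theorem stmt_11_general {κ : Type*} [LinearOrder κ]
    {G : κ → Type*} [∀ u, CommGroup (G u)] [∀ u, LinearOrder (G u)]
    [∀ u, CovariantClass (G u) (G u) (· * ·) (· ≤ ·)]
    (ς : ∀ u v, u ≤ v → G u →* G v)
    (hmono : ∀ u v (h : u ≤ v) (x y : G u), x ≤ y → ς u v h x ≤ ς u v h y)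
    (s : κ) (Ptilde : Set (G s))
    (hPmul : Ptilde * Ptilde ⊆ Ptilde)
    (hPanti : Ptilde ∩ Ptilde⁻¹ = {1})
    (hPext : {x : G s | 1 ≤ x} ⊆ Ptilde)
    (v : κ) (hv : s < v) :
    (ς s v hv.le '' Ptilde) * (ς s v hv.le '' Ptilde) ⊆ ς s v hv.le '' Ptilde ∧
    (ς s v hv.le '' Ptilde) ∩ (ς s v hv.le '' Ptilde)⁻¹ = {1} := by
  have hf : Monotone (ς s v hv.le) := fun x y => hmono s v hv.le x y
  refine ⟨Set.image_mul_subset_image_of_mul_subset _ hPmul,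
    Set.inter_inv_eq_one_of_one_le ?_ ⟨1, hPext le_rfl, map_one _⟩⟩
  rintro _ ⟨a, ha, rfl⟩
  simpa using hf (one_le_of_mem_of_inter_inv_eq_one hPanti hPext ha)

/-- Direct system of abelian o-groups over a totally ordered index set, in
which preimages of strictly positive elements are strictly positive.  Given a
total-order cone `P̃ₛ ⊇ Pₛ` on `Gₛ`, the sets `P̃ᵥ = ς_{s→v}(P̃ₛ)` (for
`v > s`) are positive cones of partial orders on `Gᵥ`. -/
theorem stmt_11 {κ : Type*} [LinearOrder κ]
    {G : κ → Type*} [∀ u, CommGroup (G u)] [∀ u, LinearOrder (G u)]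
    [∀ u, CovariantClass (G u) (G u) (· * ·) (· ≤ ·)]
    (ς : ∀ u v, u ≤ v → G u →* G v)
    (hid : ∀ u, ς u u le_rfl = MonoidHom.id (G u))
    (hcomp : ∀ u v w (h1 : u ≤ v) (h2 : v ≤ w) (x : G u),
      ς v w h2 (ς u v h1 x) = ς u w (h1.trans h2) x)
    (hmono : ∀ u v (h : u ≤ v) (x y : G u), x ≤ y → ς u v h x ≤ ς u v h y)
    (hpre : ∀ u v (h : u ≤ v) (x : G u), 1 < ς u v h x → 1 < x)
    (s : κ) (Ptilde : Set (G s))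
    (hPmul : Ptilde * Ptilde ⊆ Ptilde)
    (hPanti : Ptilde ∩ Ptilde⁻¹ = {1})
    (hPtotal : ∀ x : G s, x ∈ Ptilde ∨ x⁻¹ ∈ Ptilde)
    (hPext : {x : G s | 1 ≤ x} ⊆ Ptilde)
    (v : κ) (hv : s < v) :
    (ς s v hv.le '' Ptilde) * (ς s v hv.le '' Ptilde) ⊆ ς s v hv.le '' Ptilde ∧
    (ς s v hv.le '' Ptilde) ∩ (ς s v hv.le '' Ptilde)⁻¹ = {1} :=
  stmt_11_general ς hmono s Ptilde hPmul hPanti hPext v hv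
end

section
/- Under the hypotheses of the previous setting (direct system of abelian o-groups with preimages of strictly positive elements strictly positive, P̃_s ⊇ P_s a total order cone on G_s, P̃_v = ς_{s→v}(P̃_s) for v > s), for every v > s it holds that P̃_v⁻¹ ∩ P_v = {1}, where P_v is the original positive cone of G_v. -/
open Pointwise

/-! If `x⁻¹ = ς p` with `p ∈ P̃ₛ` and `1 ≤ x`, then `ς p ≤ 1`. Were `ς p < 1`, the element
`p⁻¹` would be strictly positive (preimages of strictly positive elements are strictly positive),
hence in `P̃ₛ ⊇ Pₛ`; so `p ∈ P̃ₛ ∩ P̃ₛ⁻¹ = {1}`, absurd. Thus `ς p = 1` and `x = 1`. -/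

theorem MonoidHom.map_eq_one_of_map_le_one {G H : Type*} [Group G] [Preorder G]
    [Group H] [LinearOrder H] [MulLeftMono H] (f : G →* H)
    (hf : ∀ x, 1 < f x → 1 < x) {P : Set G} (hPanti : P ∩ P⁻¹ = {1})
    (hPext : {x : G | 1 ≤ x} ⊆ P) {p : G} (hp : p ∈ P) (hfp : f p ≤ 1) : f p = 1 := by
  refine hfp.antisymm (not_lt.1 fun hlt => ?_)
  have hpinv : p⁻¹ ∈ P := hPext (hf _ (by simpa using one_lt_inv'.2 hlt)).le
  have hp1 : p ∈ P ∩ P⁻¹ := ⟨hp, hpinv⟩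
  rw [hPanti, Set.mem_singleton_iff] at hp1
  simp [hp1] at hlt

theorem MonoidHom.inv_image_inter_setOf_one_le_eq_one {G H : Type*} [Group G] [Preorder G]
    [Group H] [LinearOrder H] [MulLeftMono H] (f : G →* H)
    (hf : ∀ x, 1 < f x → 1 < x) {P : Set G} (hPanti : P ∩ P⁻¹ = {1})
    (hPext : {x : G | 1 ≤ x} ⊆ P) : (f '' P)⁻¹ ∩ {x : H | 1 ≤ x} = {1} := by
  ext x
  simp only [Set.mem_inter_iff, Set.mem_inv, Set.mem_image, Set.mem_ofPred_eq,
    Set.mem_singleton_iff]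
  constructor
  · rintro ⟨⟨p, hp, hpx⟩, hx⟩
    have hfp : f p = 1 :=
      f.map_eq_one_of_map_le_one hf hPanti hPext hp (hpx ▸ inv_le_one'.2 hx)
    rw [← inv_inj, ← hpx, hfp, inv_one]
  · rintro rfl
    exact ⟨⟨1, hPext le_rfl, by simp⟩, le_rfl⟩

theorem stmt_12_general {κ : Type*} [LinearOrder κ]
    {G : κ → Type*} [∀ u, CommGroup (G u)] [∀ u, LinearOrder (G u)]
    [∀ u, CovariantClass (G u) (G u) (· * ·) (· ≤ ·)]
    (ς : ∀ u v, u ≤ v → G u →* G v)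
    (hpre : ∀ u v (h : u ≤ v) (x : G u), 1 < ς u v h x → 1 < x)
    (s : κ) (Ptilde : Set (G s))
    (hPanti : Ptilde ∩ Ptilde⁻¹ = {1})
    (hPext : {x : G s | 1 ≤ x} ⊆ Ptilde)
    (v : κ) (hv : s < v) :
    (ς s v hv.le '' Ptilde)⁻¹ ∩ {x : G v | 1 ≤ x} = {1} :=
  (ς s v hv.le).inv_image_inter_setOf_one_le_eq_one (hpre s v hv.le) hPanti hPext

/-- Under the same hypotheses as before, for `v > s` one has
`P̃ᵥ⁻¹ ∩ Pᵥ = {1}`, where `Pᵥ` is the original positive cone of `Gᵥ` and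
`P̃ᵥ = ς_{s→v}(P̃ₛ)`. -/
theorem stmt_12 {κ : Type*} [LinearOrder κ]
    {G : κ → Type*} [∀ u, CommGroup (G u)] [∀ u, LinearOrder (G u)]
    [∀ u, CovariantClass (G u) (G u) (· * ·) (· ≤ ·)]
    (ς : ∀ u v, u ≤ v → G u →* G v)
    (hid : ∀ u, ς u u le_rfl = MonoidHom.id (G u))
    (hcomp : ∀ u v w (h1 : u ≤ v) (h2 : v ≤ w) (x : G u),
      ς v w h2 (ς u v h1 x) = ς u w (h1.trans h2) x)
    (hmono : ∀ u v (h : u ≤ v) (x y : G u), x ≤ y → ς u v h x ≤ ς u v h y)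
    (hpre : ∀ u v (h : u ≤ v) (x : G u), 1 < ς u v h x → 1 < x)
    (s : κ) (Ptilde : Set (G s))
    (hPmul : Ptilde * Ptilde ⊆ Ptilde)
    (hPanti : Ptilde ∩ Ptilde⁻¹ = {1})
    (hPtotal : ∀ x : G s, x ∈ Ptilde ∨ x⁻¹ ∈ Ptilde)
    (hPext : {x : G s | 1 ≤ x} ⊆ Ptilde)
    (v : κ) (hv : s < v) :
    (ς s v hv.le '' Ptilde)⁻¹ ∩ {x : G v | 1 ≤ x} = {1} :=
  stmt_12_general ς hpre s Ptilde hPanti hPext v hv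
end

section
/- Any partial order of an abelian group G can be extended to a total order making G a totally ordered abelian group if and only if G is torsion-free. -/
/-! A translation-invariant partial order is determined by its positive cone. By Zorn's lemma
every cone lies in a maximal one, and in a torsion-free group a maximal cone `M` contains `g`
or `-g`: otherwise, adjoining `g` and adjoining `-g` both fail to give a cone, which produces
`m • g ∈ M` and `-(n • g) ∈ M` with `m, n > 0`, hence `(m * n) • g = 0`. Conversely, torsion
cannot survive in a linearly ordered group, so extending the discrete order forces torsion-freeness. -/

section

variable {G : Type*} [AddCommGroup G]

lemma isAddTorsionFree_iff_forall_nsmul_eq_zero :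
    IsAddTorsionFree G ↔ ∀ (n : ℕ) (g : G), 0 < n → n • g = 0 → g = 0 := by
  refine ⟨fun _ n g hn ↦ (nsmul_eq_zero_iff_right hn.ne').1, fun h ↦ ⟨fun n hn a b hab ↦ ?_⟩⟩
  rw [← sub_eq_zero] at hab ⊢
  exact h n _ (Nat.pos_of_ne_zero hn) (by simpa [nsmul_sub] using hab)

lemma IsAddTorsionFree.of_isLinearOrder (t : G → G → Prop) [IsLinearOrder G t]
    (ht : ∀ x y z : G, t x y → t (x + z) (y + z)) : IsAddTorsionFree G := by
  let : LinearOrder G :=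
    { le := t
      le_refl := refl_of t
      le_trans := fun _ _ _ ↦ trans_of t
      le_antisymm := fun _ _ ↦ antisymm_of t
      le_total := total_of t
      toDecidableLE := Classical.decRel t }
  have : IsOrderedAddMonoid G := { add_le_add_left := fun a b hab c ↦ ht a b c hab }
  infer_instance

namespace AddGroupCone

def ofIsPartialOrder (r : G → G → Prop) [IsPartialOrder G r]
    (hr : ∀ x y z : G, r x y → r (x + z) (y + z)) : AddGroupCone G where
  carrier := {g | r 0 g}
  zero_mem' := refl_of r 0
  add_mem' {a b} ha hb := trans_of r ha (by simpa [add_comm] using hr 0 b a hb)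
  eq_zero_of_mem_of_neg_mem' {a} ha hna :=
    antisymm_of r (by simpa using hr 0 (-a) a hna) ha

def sUnionOfIsChain {c : Set (AddGroupCone G)} (hc : IsChain (· ≤ ·) c) (hne : c.Nonempty) :
    AddGroupCone G where
  carrier := ⋃ C ∈ c, (C : Set G)
  zero_mem' := Set.mem_biUnion hne.some_mem (zero_mem _)
  add_mem' {a b} ha hb := by
    obtain ⟨C₁, hC₁, ha⟩ := Set.mem_iUnion₂.1 ha
    obtain ⟨C₂, hC₂, hb⟩ := Set.mem_iUnion₂.1 hb
    obtain ⟨C, hC, h₁, h₂⟩ := hc.directedOn C₁ hC₁ C₂ hC₂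
    exact Set.mem_biUnion hC (add_mem (h₁ ha) (h₂ hb))
  eq_zero_of_mem_of_neg_mem' {a} ha hna := by
    obtain ⟨C₁, hC₁, ha⟩ := Set.mem_iUnion₂.1 ha
    obtain ⟨C₂, hC₂, hna⟩ := Set.mem_iUnion₂.1 hna
    obtain ⟨C, -, h₁, h₂⟩ := hc.directedOn C₁ hC₁ C₂ hC₂
    exact eq_zero_of_mem_of_neg_mem (h₁ ha) (h₂ hna)

lemma le_sUnionOfIsChain {c : Set (AddGroupCone G)} (hc : IsChain (· ≤ ·) c)
    (hne : c.Nonempty) {C : AddGroupCone G} (hC : C ∈ c) : C ≤ sUnionOfIsChain hc hne :=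
  fun _ ha ↦ Set.mem_biUnion hC ha

lemma exists_le_isMax (C : AddGroupCone G) : ∃ M, C ≤ M ∧ IsMax M :=
  zorn_le_nonempty_Ici₀ C (fun _ _ hc D hD ↦
    ⟨sUnionOfIsChain hc ⟨D, hD⟩, fun _ ↦ le_sUnionOfIsChain hc ⟨D, hD⟩⟩) C le_rfl

def adjoin (M : AddGroupCone G) (g : G) (hg : ∀ n : ℕ, 0 < n → -(n • g) ∉ M) :
    AddGroupCone G where
  toAddSubmonoid := M.toAddSubmonoid ⊔ AddSubmonoid.closure {g}
  eq_zero_of_mem_of_neg_mem' {x} hx hnx := by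
    obtain ⟨c₁, hc₁, _, hn₁, rfl⟩ := AddSubmonoid.mem_sup.1 hx
    obtain ⟨n₁, rfl⟩ := AddSubmonoid.mem_closure_singleton.1 hn₁
    obtain ⟨c₂, hc₂, _, hn₂, hc₂x⟩ := AddSubmonoid.mem_sup.1 hnx
    obtain ⟨n₂, rfl⟩ := AddSubmonoid.mem_closure_singleton.1 hn₂
    rcases Nat.eq_zero_or_pos (n₁ + n₂) with h0 | hpos
    · obtain ⟨rfl, rfl⟩ := Nat.add_eq_zero_iff.1 h0
      simp only [zero_smul, add_zero] at hc₂x ⊢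
      exact eq_zero_of_mem_of_neg_mem (C := M) hc₁ (hc₂x ▸ hc₂)
    · refine absurd ?_ (hg _ hpos)
      have hsum : -((n₁ + n₂) • g) = c₁ + c₂ := by
        rw [eq_neg_iff_add_eq_zero] at hc₂x
        rw [add_smul, neg_eq_iff_add_eq_zero, ← hc₂x]
        abel
      exact hsum ▸ add_mem hc₁ hc₂

lemma le_adjoin (M : AddGroupCone G) (g : G) (hg : ∀ n : ℕ, 0 < n → -(n • g) ∉ M) :
    M ≤ adjoin M g hg :=
  fun _ hx ↦ AddSubmonoid.mem_sup_left hx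

lemma mem_adjoin (M : AddGroupCone G) (g : G) (hg : ∀ n : ℕ, 0 < n → -(n • g) ∉ M) :
    g ∈ adjoin M g hg :=
  AddSubmonoid.mem_sup_right (AddSubmonoid.subset_closure rfl)

lemma exists_neg_nsmul_mem_of_isMax {M : AddGroupCone G} (hM : IsMax M) {g : G} (hg : g ∉ M) :
    ∃ n : ℕ, 0 < n ∧ -(n • g) ∈ M := by
  by_contra! h
  exact hg (hM (le_adjoin M g h) (mem_adjoin M g h))

lemma hasMemOrNegMem_of_isMax [IsAddTorsionFree G] {M : AddGroupCone G} (hM : IsMax M) :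
    HasMemOrNegMem M := by
  refine ⟨fun g ↦ by_contra fun h ↦ ?_⟩
  push Not at h
  obtain ⟨n, hn, hng⟩ := exists_neg_nsmul_mem_of_isMax hM h.1
  obtain ⟨m, hm, hmg⟩ := exists_neg_nsmul_mem_of_isMax hM h.2
  rw [smul_neg, neg_neg] at hmg
  have : (m * n) • g = 0 := eq_zero_of_mem_of_neg_mem
    (by rw [mul_nsmul]; exact nsmul_mem hmg n)
    (by rw [mul_comm, mul_nsmul, ← smul_neg]; exact nsmul_mem hng m)
  exact h.1 ((nsmul_eq_zero_iff_right (by positivity)).1 this ▸ zero_mem M)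

end AddGroupCone

theorem exists_linear_extension_of_isAddTorsionFree [IsAddTorsionFree G] (r : G → G → Prop)
    [IsPartialOrder G r] (hr : ∀ x y z : G, r x y → r (x + z) (y + z)) :
    ∃ t : G → G → Prop, IsLinearOrder G t ∧ (∀ x y z : G, t x y → t (x + z) (y + z)) ∧
      ∀ x y : G, r x y → t x y := by
  obtain ⟨M, hCM, hM⟩ := (AddGroupCone.ofIsPartialOrder r hr).exists_le_isMax
  have := AddGroupCone.hasMemOrNegMem_of_isMax hM
  classical
  let := LinearOrder.mkOfAddGroupCone M
  have := IsOrderedAddMonoid.mkOfCone M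
  refine ⟨(· ≤ ·), inferInstance, fun x y z hxy ↦ add_le_add_left hxy z, fun x y hxy ↦ hCM ?_⟩
  show r 0 (y - x)
  simpa [sub_eq_add_neg] using hr x y (-x) hxy

end

/-- Every translation-invariant partial order on an abelian group `G` extends
to a translation-invariant total order if and only if `G` is torsion-free. -/
theorem stmt_15 {G : Type*} [AddCommGroup G] :
    (∀ r : G → G → Prop, IsPartialOrder G r →
      (∀ x y z : G, r x y → r (x + z) (y + z)) →
      ∃ t : G → G → Prop, IsLinearOrder G t ∧
        (∀ x y z : G, t x y → t (x + z) (y + z)) ∧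
        ∀ x y : G, r x y → t x y) ↔
    (∀ (n : ℕ) (g : G), 0 < n → n • g = 0 → g = 0) := by
  rw [← isAddTorsionFree_iff_forall_nsmul_eq_zero]
  refine ⟨fun h ↦ ?_, fun _ r _ hr ↦ exists_linear_extension_of_isAddTorsionFree r hr⟩
  have hEq : IsPartialOrder G Eq :=
    { refl := fun _ ↦ rfl, trans := fun _ _ _ ↦ Eq.trans, antisymm := fun _ _ h _ ↦ h }
  obtain ⟨t, ht, htr, -⟩ := h Eq hEq fun _ _ _ h ↦ h ▸ rfl
  exact .of_isLinearOrder t htr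
end

section
/- In a direct system ⟨Gᵤ, ς_{u→v}⟩ of partially ordered abelian groups over a totally ordered index set, define for each u: Q̄ᵤ = {x ∈ Gᵤ : ς_{u→v}(x) is strictly positive in G_v for some v ≥ u}. Then Q̄ᵤ·Q̄ᵤ ⊆ Q̄ᵤ and Q̄ᵤ ∩ Q̄ᵤ⁻¹ = ∅, so Q̄ᵤ ∪ {1} is the positive cone of a partial order on Gᵤ extending the original one. -/
/-!
An element that is strictly positive in some layer `G v` stays `≥ 1` in every later layer, since
the transition maps are monotone but need not be strictly monotone. Given witnesses `v₁ ≤ v₂` for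
`x` and `y`, the later layer `v₂` therefore witnesses `x * y`; comparability of the indices is
what makes this work, a common upper bound would not do. If `x` and `x⁻¹` were both in `Q̄ᵤ`,
then so would be `1 = x * x⁻¹`, which has image `1` everywhere.
-/

open Pointwise

namespace Set

variable {α : Type*}

theorem union_one_mul_subset [MulOneClass α] {S : Set α} (hS : S * S ⊆ S) :
    (S ∪ {1}) * (S ∪ {1}) ⊆ S ∪ {1} := by
  refine mul_subset_iff.mpr ?_
  rintro x (hx | rfl) y (hy | rfl)
  · exact Or.inl (hS (mul_mem_mul hx hy))
  · rw [mul_one]; exact Or.inl hx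
  · rw [one_mul]; exact Or.inl hy
  · rw [mul_one]; exact Or.inr rfl

theorem inter_inv_eq_empty_of_mul_subset [Group α] {S : Set α} (hS : S * S ⊆ S)
    (h1 : (1 : α) ∉ S) : S ∩ S⁻¹ = ∅ :=
  eq_empty_of_forall_notMem fun x ⟨hx, hxi⟩ =>
    h1 (mul_inv_cancel x ▸ hS (mul_mem_mul hx (mem_inv.mp hxi)))

theorem union_one_inter_inv_eq_one [DivisionMonoid α] {S : Set α} (hS : S ∩ S⁻¹ = ∅) :
    (S ∪ {1}) ∩ (S ∪ {1})⁻¹ = {1} := by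
  have hS' := eq_empty_iff_forall_notMem.mp hS
  ext x
  simp only [mem_inter_iff, mem_union, mem_inv, mem_singleton_iff, inv_eq_one]
  constructor
  · rintro ⟨hx | hx, hxi | hxi⟩
    · exact (hS' x ⟨hx, hxi⟩).elim
    · exact (hS' 1 ⟨hxi ▸ hx, by rwa [mem_inv, inv_one, ← hxi]⟩).elim
    · exact hx
    · exact hx
  · rintro rfl
    exact ⟨Or.inr rfl, Or.inr rfl⟩

end Set

section DirectSystem

variable {κ : Type*} {G : κ → Type*} [∀ u, CommMonoid (G u)] [∀ u, Preorder (G u)]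

structure IsOrderedDirectSystem [Preorder κ] (ς : ∀ u v, u ≤ v → G u →* G v) : Prop where
  map_id : ∀ u, ς u u le_rfl = MonoidHom.id (G u)
  map_map : ∀ u v w (h1 : u ≤ v) (h2 : v ≤ w) (x : G u),
    ς v w h2 (ς u v h1 x) = ς u w (h1.trans h2) x
  map_mono : ∀ u v (h : u ≤ v) (x y : G u), x ≤ y → ς u v h x ≤ ς u v h y

def eventuallyPositive [Preorder κ] (ς : ∀ u v, u ≤ v → G u →* G v) (u : κ) : Set (G u) :=
  {x | ∃ v, ∃ h : u ≤ v, 1 < ς u v h x}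

section Preorder

variable [Preorder κ] {ς : ∀ u v, u ≤ v → G u →* G v}

theorem one_notMem_eventuallyPositive (u : κ) : (1 : G u) ∉ eventuallyPositive ς u :=
  fun ⟨v, h, hv⟩ => (map_one (ς u v h) ▸ hv).false

theorem IsOrderedDirectSystem.mem_eventuallyPositive_of_one_lt (hς : IsOrderedDirectSystem ς)
    {u : κ} {x : G u} (hx : 1 < x) : x ∈ eventuallyPositive ς u :=
  ⟨u, le_rfl, by rwa [hς.map_id]⟩

theorem IsOrderedDirectSystem.one_le_map_of_one_lt (hς : IsOrderedDirectSystem ς)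
    {u v w : κ} (huv : u ≤ v) (hvw : v ≤ w) {x : G u} (hx : 1 < ς u v huv x) :
    1 ≤ ς u w (huv.trans hvw) x := by
  simpa [hς.map_map] using hς.map_mono v w hvw 1 _ hx.le

theorem IsOrderedDirectSystem.mul_mem_eventuallyPositive_of_le [∀ u, MulLeftMono (G u)]
    (hς : IsOrderedDirectSystem ς) {u v₁ v₂ : κ} (h₁ : u ≤ v₁) (h₂ : u ≤ v₂) (hv : v₁ ≤ v₂)
    {x y : G u} (hx : 1 < ς u v₁ h₁ x) (hy : 1 < ς u v₂ h₂ y) :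
    x * y ∈ eventuallyPositive ς u := by
  refine ⟨v₂, h₂, ?_⟩
  rw [map_mul, mul_comm]
  exact one_lt_mul_of_lt_of_le' hy (hς.one_le_map_of_one_lt h₁ hv hx)

end Preorder

theorem IsOrderedDirectSystem.eventuallyPositive_mul_subset [LinearOrder κ]
    [∀ u, MulLeftMono (G u)] {ς : ∀ u v, u ≤ v → G u →* G v} (hς : IsOrderedDirectSystem ς)
    (u : κ) : eventuallyPositive ς u * eventuallyPositive ς u ⊆ eventuallyPositive ς u := by
  refine Set.mul_subset_iff.mpr ?_
  rintro x ⟨v₁, h₁, hx⟩ y ⟨v₂, h₂, hy⟩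
  rcases le_total v₁ v₂ with hv | hv
  · exact hς.mul_mem_eventuallyPositive_of_le h₁ h₂ hv hx hy
  · exact mul_comm y x ▸ hς.mul_mem_eventuallyPositive_of_le h₂ h₁ hv hy hx

end DirectSystem

/-- In a direct system of partially ordered abelian groups over a totally
ordered index set, the set `Q̄ᵤ` of elements with strictly positive image in
some later layer is a strict positive cone, and `Q̄ᵤ ∪ {1}` is the positive
cone of a partial order on `Gᵤ` extending the original one. -/
theorem stmt_18 {κ : Type*} [LinearOrder κ]
    {G : κ → Type*} [∀ u, CommGroup (G u)] [∀ u, PartialOrder (G u)]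
    [∀ u, CovariantClass (G u) (G u) (· * ·) (· ≤ ·)]
    (ς : ∀ u v, u ≤ v → G u →* G v)
    (hid : ∀ u, ς u u le_rfl = MonoidHom.id (G u))
    (hcomp : ∀ u v w (h1 : u ≤ v) (h2 : v ≤ w) (x : G u),
      ς v w h2 (ς u v h1 x) = ς u w (h1.trans h2) x)
    (hmono : ∀ u v (h : u ≤ v) (x y : G u), x ≤ y → ς u v h x ≤ ς u v h y)
    (u : κ) (Qbar : Set (G u))
    (hQbar : Qbar = {x : G u | ∃ v, ∃ h : u ≤ v, 1 < ς u v h x}) :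
    Qbar * Qbar ⊆ Qbar ∧
    Qbar ∩ Qbar⁻¹ = ∅ ∧
    (Qbar ∪ {1}) * (Qbar ∪ {1}) ⊆ Qbar ∪ {1} ∧
    (Qbar ∪ {1}) ∩ (Qbar ∪ {1})⁻¹ = {1} ∧
    {x : G u | 1 ≤ x} ⊆ Qbar ∪ {1} := by
  have hς : IsOrderedDirectSystem ς := ⟨hid, hcomp, hmono⟩
  obtain rfl : Qbar = eventuallyPositive ς u := hQbar
  have hmul := hς.eventuallyPositive_mul_subset u
  have hdisj := Set.inter_inv_eq_empty_of_mul_subset hmul (one_notMem_eventuallyPositive u)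
  refine ⟨hmul, hdisj, Set.union_one_mul_subset hmul, Set.union_one_inter_inv_eq_one hdisj, ?_⟩
  intro x hx
  rcases hx.eq_or_lt with rfl | hlt
  · exact Or.inr rfl
  · exact Or.inl (hς.mem_eventuallyPositive_of_one_lt hlt)
end
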